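/- arXiv:2301.13235 — 4 statements merged into one kernel-verified Lean document; each statement's English description precedes it below -/
import Mathlib

section
/- Let X be a d-dimensional Ornstein–Uhlenbeck process dX_t^j = κ^j(θ^j − X_t^j)dt + σ^j dW_t^j driven by correlated Brownian motions with correlation matrix ρ, correlated with the price-driving Brownian motion B (labelled d+1). Then the Itô-to-signature correction element satisfies ẽ_I^B = e_I ⊗ e_{d+1} − (1/2) 1_{{i_{|I|} ≠ 0}} σ^{i_{|I|}} ρ_{i_{|I|}, d+1} e_{I'} ⊗ e_0 for every multi-index I ≠ ∅, i.e., ∫_0^t ⟨e_I, 𝕏̂_s⟩ dB_s = ⟨ẽ_I^B, ℤ̂_t⟩. -/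
open MeasureTheory intervalIntegral

/-- Words (multi-indices) over an alphabet of `d` letters. -/
abbrev Word (d : ℕ) := List (Fin d)

/-- The shuffle product of two words, as a multiset of words. -/
def shuffle {d : ℕ} : Word d → Word d → Multiset (Word d)
  | [], J => {J}
  | I, [] => {I}
  | i :: I, j :: J =>
      (shuffle I (j :: J)).map (i :: ·) + (shuffle (i :: I) J).map (j :: ·)
  termination_by I J => I.length + J.length

/-- Pairing of a linear functional on words with a formal sum of words. -/
def pairWith {d : ℕ} (f : Word d → ℝ) (m : Multiset (Word d)) : ℝ :=
  (m.map f).sum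

/-- Coefficient of the word `K` in `e_I ⧢ u`, for a finitely supported `u ∈ T(ℝ^d)`. -/
noncomputable def shufCoeff {d : ℕ} (I : Word d) (u : Word d →₀ ℝ) (K : Word d) : ℝ :=
  ∑ J ∈ u.support, u J * ((shuffle I J).count K : ℝ)

/-- The dual operator `L`:
`L e_∅ = 0`, `L e_I = e_{I'} ⧢ 𝐛_{i_{|I|}} + (1/2) e_{I''} ⧢ 𝐚_{i_{|I|-1} i_{|I|}}`
(coefficient of `e_K`), where `𝐛_j, 𝐚_{ij} ∈ T(ℝ^d)` encode drift and diffusion. -/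
noncomputable def Lop {d : ℕ} (b : Fin d → Word d →₀ ℝ) (a : Fin d → Fin d → Word d →₀ ℝ)
    (I : Word d) : Word d → ℝ :=
  match I.reverse with
  | [] => 0
  | [i] => shufCoeff ([] : Word d) (b i)
  | i :: j :: Irr => fun K =>
      shufCoeff (j :: Irr).reverse (b i) K + (1 / 2) * shufCoeff Irr.reverse (a j i) K


/-- **The Itô-to-signature correction for an OU primary process** (Corollary 7.7).
For `X` a d-dimensional OU process and `B` the price-driving Brownian motion
(letter d+1), the covariation coefficients are constants `a_{j,d+1} = σ^j ρ_{j,d+1} e_∅`,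
so the general correction element reduces to
`ẽ_I^B = e_I ⊗ e_{d+1} − (1/2) 1_{i_{|I|} ≠ 0} σ^{i_{|I|}} ρ_{i_{|I|},d+1} e_{I'} ⊗ e_0`,
i.e. `∫₀ᵗ ⟨e_I, 𝕏̂_s⟩ dB_s = ⟨ẽ_I^B, ℤ̂_t⟩`. -/
theorem etilde_OU
    {d : ℕ} {Ω : Type} [MeasurableSpace Ω]
    (sigZ : Word (d + 2) → ℝ → Ω → ℝ)
    (σc ρc : Fin (d + 2) → ℝ)    -- σ^j and ρ_{j,d+1}
    (acoef : Fin (d + 2) → Fin (d + 2) → Word (d + 2) →₀ ℝ)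
    -- OU covariation with B: a_{j,d+1} = σ^j ρ_{j,d+1} e_∅ (zero for the time letter):
    (hacoef : ∀ j : Fin (d + 2), acoef j (Fin.last (d + 1))
        = Finsupp.single [] (if j = 0 then 0 else σc j * ρc j))
    (ItoInt : Word (d + 2) → ℝ → Ω → ℝ)
    -- general Itô-to-signature identity (Lemma 3.10 of [CGS22]):
    (hkey : ∀ (I : Word (d + 2)) (hI : I ≠ []) (t : ℝ) (ω : Ω), 0 ≤ t →
      ItoInt I t ω = sigZ (I ++ [Fin.last (d + 1)]) t ω
        - (acoef (I.getLast hI) (Fin.last (d + 1))).sum fun J c =>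
            c / 2 * pairWith (fun K => sigZ K t ω) ((shuffle I.dropLast J).map (· ++ [0]))) :
    ∀ (I : Word (d + 2)) (hI : I ≠ []) (t : ℝ) (ω : Ω), 0 ≤ t →
      ItoInt I t ω = sigZ (I ++ [Fin.last (d + 1)]) t ω
        - 1 / 2 * (if I.getLast hI = 0 then 0 else σc (I.getLast hI) * ρc (I.getLast hI))
            * sigZ (I.dropLast ++ [0]) t ω := by
  intro I hI t ω ht
  have hsh : shuffle I.dropLast ([] : Word (d + 2)) = {I.dropLast} := by
    cases I.dropLast with
    | nil => simp [shuffle]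
    | cons a l => simp [shuffle]
  rw [hkey I hI t ω ht, hacoef]
  congr 1
  by_cases h0 : I.getLast hI = 0
  · simp [h0, Finsupp.sum]
  · rw [if_neg h0, Finsupp.sum_single_index]
    · rw [hsh]
      simp only [pairWith, Multiset.map_singleton, Multiset.sum_singleton]
      ring
    · simp [pairWith]
end

section
/- Let Y be a polynomial process with truncated signature 𝕐^n and let 𝕐_s^{-1} be defined by the group inverse relation e_∅ = 𝕐_s^{-1} ⊗ 𝕐_s. Then for each s ≤ u ≤ t and |I| ≤ n, the conditional expectation of a two-parameter signature component satisfies E[⟨e_I, 𝕐_{s,t}⟩ | F_u] = Σ_{e_{I₁} ⊗ e_{I₂} = e_I} ⟨e_{I₁}, 𝕐_s^{-1}⟩ · vec(e_{I₂})^T e^{(t−u)G^T} vec(𝕐_u^n), where G is the d_n-dimensional matrix representative of the dual operator of 𝕐. -/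
open MeasureTheory intervalIntegral

/-- Entry of the matrix exponential `e^{τ Gᵀ}` read through words (zero off `𝒲`). -/
noncomputable def expEnt {d : ℕ} (𝒲 : Finset (Word d)) (G : Matrix 𝒲 𝒲 ℝ)
    (τ : ℝ) (K : Word d) (H : 𝒲) : ℝ :=
  if hK : K ∈ 𝒲 then NormedSpace.exp (τ • G.transpose) ⟨K, hK⟩ H else 0

/-!
Chen's identity writes `⟨e_I, 𝕐_{s,t}⟩` as a finite sum of products of the `𝓕_s`-measurable
factors `⟨e_{I₁}, 𝕐_s^{-1}⟩` with `⟨e_{I₂}, 𝕐_t⟩`. Since `𝓕_s ⊆ 𝓕_u`, the first factors pull out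
of the conditional expectation given `𝓕_u`, and the polynomial moment formula evaluates what is
left, because every suffix `I₂` of `I` has length at most `n`.
-/

theorem condExp_finsetSum_mul_ae_eq {Ω ι : Type*} {m m₀ : MeasurableSpace Ω} {μ : Measure Ω}
    {s : Finset ι} {f g h : ι → Ω → ℝ}
    (hf : ∀ i ∈ s, StronglyMeasurable[m] (f i)) (hfg : ∀ i ∈ s, Integrable (f i * g i) μ)
    (hg : ∀ i ∈ s, Integrable (g i) μ) (hgh : ∀ i ∈ s, μ[g i | m] =ᵐ[μ] h i) :
    μ[fun ω => ∑ i ∈ s, f i ω * g i ω | m] =ᵐ[μ] fun ω => ∑ i ∈ s, f i ω * h i ω := by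
  have hsum : (fun ω => ∑ i ∈ s, f i ω * g i ω) = ∑ i ∈ s, f i * g i := by
    ext ω
    simp only [Finset.sum_apply, Pi.mul_apply]
  have hterm : ∀ᵐ ω ∂μ, ∀ i ∈ s, μ[f i * g i | m] ω = f i ω * h i ω := by
    rw [Filter.eventually_all_finset]
    intro i hi
    filter_upwards [condExp_mul_of_stronglyMeasurable_left (hf i hi) (hfg i hi) (hg i hi),
      hgh i hi] with ω hpull hgω
    rw [hpull, Pi.mul_apply, hgω]
  rw [hsum]
  filter_upwards [condExp_finsetSum hfg m, hterm] with ω hsplit hω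
  rw [hsplit, Finset.sum_apply]
  exact Finset.sum_congr rfl hω

theorem expEnt_of_mem {d : ℕ} {𝒲 : Finset (Word d)} (G : Matrix 𝒲 𝒲 ℝ) (τ : ℝ) {K : Word d}
    (hK : K ∈ 𝒲) (H : 𝒲) :
    expEnt 𝒲 G τ K H = NormedSpace.exp (τ • G.transpose) ⟨K, hK⟩ H :=
  dif_pos hK

/-- **Conditional expectation of two-parameter signature components** (Remark 4.7).
With `𝕐_s^{-1}` the group inverse of the signature (`e_∅ = 𝕐_s^{-1} ⊗ 𝕐_s`) and
`𝕐_{s,t} = 𝕐_s^{-1} ⊗ 𝕐_t` (Chen), for `s ≤ u ≤ t` and `|I| ≤ n`: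
`E[⟨e_I, 𝕐_{s,t}⟩ | 𝓕_u] = Σ_{e_{I₁}⊗e_{I₂}=e_I} ⟨e_{I₁}, 𝕐_s^{-1}⟩ ·
vec(e_{I₂})ᵀ e^{(t−u)Gᵀ} vec(𝕐_u^n)`. -/
theorem cond_exp_two_parameter_signature
    {d n : ℕ} {Ω : Type} [MeasurableSpace Ω] (μ : Measure Ω)
    (ℱ : Filtration ℝ (by infer_instance : MeasurableSpace Ω))
    (sigY sigInv : Word d → ℝ → Ω → ℝ)
    (sig2 : Word d → ℝ → ℝ → Ω → ℝ)
    (𝒲 : Finset (Word d)) (h𝒲 : ∀ K : Word d, K ∈ 𝒲 ↔ K.length ≤ n)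
    -- Chen's identity: 𝕐_{s,t} = 𝕐_s^{-1} ⊗ 𝕐_t:
    (hchen : ∀ I s t ω, sig2 I s t ω
      = ∑ k ∈ Finset.range (I.length + 1), sigInv (I.take k) s ω * sigY (I.drop k) t ω)
    -- polynomial moment formula:
    (G : Matrix 𝒲 𝒲 ℝ)
    (hmoment : ∀ (J : 𝒲) (u t : ℝ), u ≤ t →
      μ[sigY J.1 t | ℱ u] =ᵐ[μ]
        fun ω => ∑ H : 𝒲, NormedSpace.exp ((t - u) • G.transpose) J H * sigY H.1 u ω)
    -- adaptedness and integrability: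
    (hadapt : ∀ I : Word d, Adapted ℱ (sigInv I))
    (hint : ∀ (I : Word d) (t : ℝ), Integrable (sigY I t) μ)
    (hint2 : ∀ (I : Word d) (k : ℕ) (s t : ℝ),
      Integrable (fun ω => sigInv (I.take k) s ω * sigY (I.drop k) t ω) μ)
    (I : Word d) (hI : I.length ≤ n) (s u t : ℝ) (hsu : s ≤ u) (hut : u ≤ t) :
    μ[sig2 I s t | ℱ u] =ᵐ[μ] fun ω =>
      ∑ k ∈ Finset.range (I.length + 1),
        sigInv (I.take k) s ω *
          ∑ H : 𝒲, expEnt 𝒲 G (t - u) (I.drop k) H * sigY H.1 u ω := by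
  have hdrop : ∀ k, I.drop k ∈ 𝒲 := fun k => (h𝒲 _).2 (by rw [List.length_drop]; omega)
  rw [funext (hchen I s t)]
  refine condExp_finsetSum_mul_ae_eq
    (fun k _ => ((hadapt (I.take k) s).mono (ℱ.mono hsu) le_rfl).stronglyMeasurable)
    (fun k _ => hint2 I k s t) (fun k _ => hint (I.drop k) t) fun k _ => ?_
  simpa only [expEnt_of_mem G _ (hdrop k)] using hmoment ⟨I.drop k, hdrop k⟩ u t hut
end

section
/- In the signature-based model with X̂ a time-extended polynomial diffusion, the unconditional expectation of VIX squared is the deterministic quadratic form E[VIX²_T(ℓ)] = (1/Δ) ℓ^T Q^{cv}(T,Δ) ℓ, with Q^{cv}_{ℒ(I)ℒ(J)}(T,Δ) = vec((e_I ⧢ e_J) ⊗ e_0)^T (e^{(T+Δ)G^T} − e^{T G^T}) vec(𝕏̂_0^{2n+1}), where vec(𝕏̂_0^{2n+1}) = e_∅ and G is the (d+1)_{2n+1}-dimensional matrix representative of the dual operator corresponding to 𝕏̂. -/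
open MeasureTheory intervalIntegral

/-!
Everything is linear in the signature vector: the conditional formula writes `VIX²_T(ℓ)` as a
fixed linear functional of `vec(𝕏̂_T)`, so its expectation is that functional applied to
`E[vec(𝕏̂_T)] = e^{TGᵀ} e_∅`, and the semigroup law `(e^{ΔGᵀ} - 1) e^{TGᵀ} = e^{(T+Δ)Gᵀ} - e^{TGᵀ}`
turns the result into the stated deterministic quadratic form.
-/

open Matrix NormedSpace

theorem MeasureTheory.integral_linearMap_pi {ι Ω E : Type*} [Fintype ι] [MeasurableSpace Ω]
    {μ : Measure Ω} [NormedAddCommGroup E] [NormedSpace ℝ E] [CompleteSpace E]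
    (L : (ι → ℝ) →ₗ[ℝ] E) {X : ι → Ω → ℝ} (hX : ∀ i, Integrable (X i) μ) :
    ∫ ω, L (fun i => X i ω) ∂μ = L (fun i => ∫ ω, X i ω ∂μ) := by
  have hmean : (fun i => ∫ ω, X i ω ∂μ) = ∫ ω, (fun i => X i ω) ∂μ :=
    funext fun i => (eval_integral hX i).symm
  rw [hmean]
  exact (LinearMap.toContinuousLinearMap L).integral_comp_comm (Integrable.of_eval hX)

theorem Matrix.exp_add_smul {m 𝕜 : Type*} [Fintype m] [DecidableEq m] [RCLike 𝕜]
    (A : Matrix m m 𝕜) (s t : 𝕜) : exp ((s + t) • A) = exp (s • A) * exp (t • A) := by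
  rw [add_smul]
  exact exp_add_of_commute _ _ (((Commute.refl A).smul_left s).smul_right t)

/-- `u ↦ (1/Δ) ℓᵀ Q ℓ` with `Q_{IJ} = vec((e_I ⧢ e_J) ⊗ e_0)ᵀ M u`. -/
noncomputable def vixForm {d : ℕ} (𝒲n : Finset (Word (d + 1))) {𝒲 : Finset (Word (d + 1))}
    (Δ : ℝ) (ℓ : Word (d + 1) → ℝ) (M : Matrix 𝒲 𝒲 ℝ) : (𝒲 → ℝ) →ₗ[ℝ] ℝ where
  toFun u := (1 / Δ) * ∑ I ∈ 𝒲n, ∑ J ∈ 𝒲n, ℓ I * ℓ J *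
    ∑ K : 𝒲, ∑ H : 𝒲, (((shuffle I J).map (· ++ [0])).count K.1 : ℝ) * M K H * u H
  map_add' u v := by simp only [Pi.add_apply, mul_add, Finset.sum_add_distrib]
  map_smul' c u := by
    simp only [Pi.smul_apply, smul_eq_mul, RingHom.id_apply, mul_left_comm _ c, ← Finset.mul_sum]

theorem vixForm_mulVec {d : ℕ} (𝒲n : Finset (Word (d + 1))) {𝒲 : Finset (Word (d + 1))}
    (Δ : ℝ) (ℓ : Word (d + 1) → ℝ) (M N : Matrix 𝒲 𝒲 ℝ) (u : 𝒲 → ℝ) :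
    vixForm 𝒲n Δ ℓ M (N *ᵥ u) = vixForm 𝒲n Δ ℓ (M * N) u := by
  have hrow : ∀ (c : ℝ) (K : 𝒲), ∑ H, c * M K H * (N *ᵥ u) H = ∑ H, c * (M * N) K H * u H := by
    intro c K
    simp only [mul_assoc, ← Finset.mul_sum]
    exact congrArg (c * ·) (congrFun (mulVec_mulVec u M N) K)
  simp only [vixForm, LinearMap.coe_mk, AddHom.coe_mk, hrow]

theorem expected_vix_squared_general
    {d : ℕ} {Ω : Type} [MeasurableSpace Ω] (μ : Measure Ω)
    (sigX : Word (d + 1) → ℝ → Ω → ℝ)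
    (𝒲n : Finset (Word (d + 1)))
    (𝒲 : Finset (Word (d + 1)))
    (G : Matrix 𝒲 𝒲 ℝ)
    (Δ T : ℝ)
    (hint : ∀ I : 𝒲, Integrable (sigX I.1 T) μ)
    -- unconditional moment formula with vec(𝕏̂_0^{2n+1}) = e_∅:
    (hmoment0 : ∀ I : 𝒲, ∫ ω, sigX I.1 T ω ∂μ
      = ∑ J : 𝒲, NormedSpace.exp (T • G.transpose) I J * (if J.1 = [] then (1:ℝ) else 0))
    (ℓ : Word (d + 1) → ℝ) :
    ∫ ω, (1 / Δ) * (∑ I ∈ 𝒲n, ∑ J ∈ 𝒲n, ℓ I * ℓ J *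
        ∑ K : 𝒲, ∑ H : 𝒲, (((shuffle I J).map (· ++ [0])).count K.1 : ℝ) *
          ((NormedSpace.exp (Δ • G.transpose) - 1) K H) * sigX H.1 T ω) ∂μ
      = (1 / Δ) * ∑ I ∈ 𝒲n, ∑ J ∈ 𝒲n, ℓ I * ℓ J *
          ∑ K : 𝒲, ∑ H : 𝒲, (((shuffle I J).map (· ++ [0])).count K.1 : ℝ) *
            ((NormedSpace.exp ((T + Δ) • G.transpose)
                - NormedSpace.exp (T • G.transpose)) K H) *
            (if H.1 = [] then (1:ℝ) else 0) := by
  have hmean : (fun H : 𝒲 => ∫ ω, sigX H.1 T ω ∂μ)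
      = exp (T • Gᵀ) *ᵥ fun H => if H.1 = [] then 1 else 0 := funext hmoment0
  have hflow : exp ((T + Δ) • Gᵀ) - exp (T • Gᵀ) = (exp (Δ • Gᵀ) - 1) * exp (T • Gᵀ) := by
    rw [sub_mul, one_mul, add_comm T, exp_add_smul]
  calc _ = vixForm 𝒲n Δ ℓ (exp (Δ • Gᵀ) - 1) (fun H => ∫ ω, sigX H.1 T ω ∂μ) :=
        integral_linearMap_pi (vixForm 𝒲n Δ ℓ _) hint
    _ = _ := by rw [hmean, vixForm_mulVec, ← hflow]; rfl

/-- **Unconditional expectation of VIX squared** (Section 5.3, control variates).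
With `VIX²_T(ℓ) = (1/Δ) ℓᵀ Q(T,Δ) ℓ` (conditional closed form) and
`E[vec(𝕏̂^{2n+1}_T)] = e^{TGᵀ} vec(𝕏̂^{2n+1}_0)`, `vec(𝕏̂_0^{2n+1}) = e_∅`, the
unconditional expectation is the deterministic quadratic form
`E[VIX²_T(ℓ)] = (1/Δ) ℓᵀ Q^{cv}(T,Δ) ℓ` with
`Q^{cv}_{ℒ(I)ℒ(J)} = vec((e_I⧢e_J)⊗e_0)ᵀ (e^{(T+Δ)Gᵀ} − e^{TGᵀ}) vec(𝕏̂_0^{2n+1})`. -/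
theorem expected_vix_squared
    {d n : ℕ} {Ω : Type} [MeasurableSpace Ω] (μ : Measure Ω) [IsProbabilityMeasure μ]
    (sigX : Word (d + 1) → ℝ → Ω → ℝ)
    (𝒲n : Finset (Word (d + 1))) (h𝒲n : ∀ K : Word (d + 1), K ∈ 𝒲n ↔ K.length ≤ n)
    (𝒲 : Finset (Word (d + 1))) (h𝒲 : ∀ K : Word (d + 1), K ∈ 𝒲 ↔ K.length ≤ 2 * n + 1)
    (G : Matrix 𝒲 𝒲 ℝ)
    (Δ T : ℝ) (hΔ : 0 < Δ) (hT : 0 ≤ T)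
    (hint : ∀ I : 𝒲, Integrable (sigX I.1 T) μ)
    -- unconditional moment formula with vec(𝕏̂_0^{2n+1}) = e_∅:
    (hmoment0 : ∀ I : 𝒲, ∫ ω, sigX I.1 T ω ∂μ
      = ∑ J : 𝒲, NormedSpace.exp (T • G.transpose) I J * (if J.1 = [] then (1:ℝ) else 0))
    (ℓ : Word (d + 1) → ℝ) :
    ∫ ω, (1 / Δ) * (∑ I ∈ 𝒲n, ∑ J ∈ 𝒲n, ℓ I * ℓ J *
        ∑ K : 𝒲, ∑ H : 𝒲, (((shuffle I J).map (· ++ [0])).count K.1 : ℝ) *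
          ((NormedSpace.exp (Δ • G.transpose) - 1) K H) * sigX H.1 T ω) ∂μ
      = (1 / Δ) * ∑ I ∈ 𝒲n, ∑ J ∈ 𝒲n, ℓ I * ℓ J *
          ∑ K : 𝒲, ∑ H : 𝒲, (((shuffle I J).map (· ++ [0])).count K.1 : ℝ) *
            ((NormedSpace.exp ((T + Δ) • G.transpose)
                - NormedSpace.exp (T • G.transpose)) K H) *
            (if H.1 = [] then (1:ℝ) else 0) :=
  expected_vix_squared_general μ sigX 𝒲n 𝒲 G Δ T hint hmoment0 ℓ
end

section
/- For the log-price in the signature model with S_0 = 1, the identity E[log(S_T(ℓ))] = −(1/2) ℓ^T Q^{0,cv}(T) ℓ holds, where Q^{0,cv}_{ℒ(I)ℒ(J)}(T) = vec((e_I ⧢ e_J) ⊗ e_0)^T e^{T G^T} vec(𝕏̂_0^{2n+1}); i.e., the linear (stochastic-integral) part of log(S_T(ℓ)) has zero expectation and the quadratic part has deterministic expectation expressible via the matrix exponential of the dual operator. -/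
open MeasureTheory intervalIntegral

/-!
Taking expectations in the log-price representation, the stochastic-integral part vanishes
because each `ẽ_I` is a martingale started at `0`. The quadratic part is a finite linear
combination of signature coordinates of length at most `2n + 1`, each of whose expectations
is given by the moment formula `E[vec 𝕏̂_T] = e^{TGᵀ} e_∅`.
-/

theorem length_eq_of_mem_shuffle {d : ℕ} : ∀ (I J K : Word d), K ∈ shuffle I J →
    K.length = I.length + J.length
  | [], J, K, h => by
      simp only [shuffle, Multiset.mem_singleton] at h
      simp [h]
  | (i :: I), [], K, h => by
      simp only [shuffle, Multiset.mem_singleton] at h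
      simp [h]
  | (i :: I), (j :: J), K, h => by
      rw [shuffle] at h
      rcases Multiset.mem_add.1 h with h' | h' <;>
        obtain ⟨K', hK', rfl⟩ := Multiset.mem_map.1 h'
      · have := length_eq_of_mem_shuffle I (j :: J) K' hK'
        simp only [List.length_cons] at this ⊢
        omega
      · have := length_eq_of_mem_shuffle (i :: I) J K' hK'
        simp only [List.length_cons] at this ⊢
        omega
  termination_by I J => I.length + J.length

theorem length_eq_of_mem_shuffle_map_append {d : ℕ} {I J K : Word d} {a : Fin d}
    (hK : K ∈ (shuffle I J).map (· ++ [a])) : K.length = I.length + J.length + 1 := by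
  obtain ⟨K', hK', rfl⟩ := Multiset.mem_map.1 hK
  simp [length_eq_of_mem_shuffle I J K' hK']

theorem pairWith_cons {d : ℕ} (f : Word d → ℝ) (K : Word d) (m : Multiset (Word d)) :
    pairWith f (K ::ₘ m) = f K + pairWith f m := by
  simp [pairWith]

theorem pairWith_eq_sum_count {d : ℕ} {s : Finset (Word d)} {m : Multiset (Word d)}
    (hm : ∀ K ∈ m, K ∈ s) (f : Word d → ℝ) :
    pairWith f m = ∑ K : s, (m.count K.1 : ℝ) * f K.1 := by
  classical
  rw [Finset.sum_coe_sort s (fun K => (m.count K : ℝ) * f K), pairWith,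
    Finset.sum_multiset_map_count]
  simp_rw [nsmul_eq_mul]
  exact Finset.sum_subset (fun K hK => hm K (Multiset.mem_toFinset.1 hK)) fun K _ hK => by
    rw [Multiset.count_eq_zero_of_notMem (by simpa using hK), Nat.cast_zero, zero_mul]

section Integration

variable {Ω : Type*} [MeasurableSpace Ω] {μ : Measure Ω}

theorem integrable_pairWith {d : ℕ} {X : Word d → Ω → ℝ} {m : Multiset (Word d)}
    (hX : ∀ K ∈ m, Integrable (X K) μ) : Integrable (fun ω => pairWith (X · ω) m) μ := by
  induction m using Multiset.induction_on with
  | empty => simp [pairWith]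
  | cons K m ih =>
    simp only [pairWith_cons]
    exact (hX K (Multiset.mem_cons_self K m)).add
      (ih fun K' hK' => hX K' (Multiset.mem_cons_of_mem hK'))

theorem integral_pairWith {d : ℕ} {X : Word d → Ω → ℝ} {m : Multiset (Word d)}
    (hX : ∀ K ∈ m, Integrable (X K) μ) :
    ∫ ω, pairWith (X · ω) m ∂μ = pairWith (fun K => ∫ ω, X K ω ∂μ) m := by
  induction m using Multiset.induction_on with
  | empty => simp [pairWith]
  | cons K m ih =>
    have hXm : ∀ K' ∈ m, Integrable (X K') μ := fun K' hK' => hX K' (Multiset.mem_cons_of_mem hK')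
    simp only [pairWith_cons]
    rw [integral_add (hX K (Multiset.mem_cons_self K m)) (integrable_pairWith hXm), ih hXm]

theorem MeasureTheory.Martingale.integral_eq_of_le {ι : Type*} [Preorder ι] {ℱ : Filtration ι ‹_›}
    {f : ι → Ω → ℝ} (hf : Martingale f ℱ μ) {i j : ι} [SigmaFinite (μ.trim (ℱ.le i))]
    (hij : i ≤ j) : ∫ ω, f j ω ∂μ = ∫ ω, f i ω ∂μ := by
  rw [← integral_condExp (ℱ.le i)]
  exact integral_congr_ae (hf.condExp_ae_eq hij)

end Integration

/-- **Expected log-price** (Remark 7.8, control variate for SPX options).  With `S_0 = 1`,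
`log S_T(ℓ) = −(1/2) ℓᵀ Q⁰(T) ℓ + Σ_{|I|≤n} ℓ_I ⟨ẽ_I^B, ℤ̂_T⟩`, the linear
(stochastic-integral) part being centered martingales, one gets
`E[log S_T(ℓ)] = −(1/2) ℓᵀ Q^{0,cv}(T) ℓ` with
`Q^{0,cv}_{ℒ(I)ℒ(J)}(T) = vec((e_I⧢e_J)⊗e_0)ᵀ e^{TGᵀ} vec(𝕏̂_0^{2n+1})`. -/
theorem expected_log_price
    {d n : ℕ} {Ω : Type} [MeasurableSpace Ω] (μ : Measure Ω) [IsProbabilityMeasure μ]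
    (ℱ : Filtration ℝ (by infer_instance : MeasurableSpace Ω))
    (S : ℝ → Ω → ℝ)
    (sigX : Word (d + 1) → ℝ → Ω → ℝ)
    (etil : Word (d + 1) → ℝ → Ω → ℝ)
    (𝒲n : Finset (Word (d + 1))) (h𝒲n : ∀ K : Word (d + 1), K ∈ 𝒲n ↔ K.length ≤ n)
    (𝒲 : Finset (Word (d + 1))) (h𝒲 : ∀ K : Word (d + 1), K ∈ 𝒲 ↔ K.length ≤ 2 * n + 1)
    (G : Matrix 𝒲 𝒲 ℝ)
    (T : ℝ) (hT : 0 ≤ T)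
    (ℓ : Word (d + 1) → ℝ)
    -- the log-price representation (Proposition 7.4):
    (hlog : ∀ ω, Real.log (S T ω)
        = -(1 / 2) * (∑ I ∈ 𝒲n, ∑ J ∈ 𝒲n, ℓ I * ℓ J *
            pairWith (fun K => sigX K T ω) ((shuffle I J).map (· ++ [0])))
          + ∑ I ∈ 𝒲n, ℓ I * etil I T ω)
    -- the components ⟨ẽ_I^B, ℤ̂⟩ are Itô integrals, hence centered martingales:
    (hmart : ∀ I : Word (d + 1), Martingale (etil I) ℱ μ)
    (hetil0 : ∀ I ω, etil I 0 ω = 0)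
    -- unconditional moment formula with vec(𝕏̂_0^{2n+1}) = e_∅:
    (hmoment0 : ∀ I : 𝒲, ∫ ω, sigX I.1 T ω ∂μ
      = ∑ J : 𝒲, NormedSpace.exp (T • G.transpose) I J * (if J.1 = [] then (1:ℝ) else 0))
    (hint : ∀ I : 𝒲, Integrable (sigX I.1 T) μ) :
    ∫ ω, Real.log (S T ω) ∂μ
      = -(1 / 2) * ∑ I ∈ 𝒲n, ∑ J ∈ 𝒲n, ℓ I * ℓ J *
          ∑ K : 𝒲, ∑ H : 𝒲, (((shuffle I J).map (· ++ [0])).count K.1 : ℝ) *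
            NormedSpace.exp (T • G.transpose) K H *
            (if H.1 = [] then (1:ℝ) else 0) := by
  have hmem : ∀ I ∈ 𝒲n, ∀ J ∈ 𝒲n, ∀ K ∈ (shuffle I J).map (· ++ [0]), K ∈ 𝒲 := by
    intro I hI J hJ K hK
    rw [h𝒲, length_eq_of_mem_shuffle_map_append hK]
    have := (h𝒲n I).1 hI
    have := (h𝒲n J).1 hJ
    omega
  have hsig_int : ∀ I ∈ 𝒲n, ∀ J ∈ 𝒲n, ∀ K ∈ (shuffle I J).map (· ++ [0]),
      Integrable (sigX K T) μ := fun I hI J hJ K hK => hint ⟨K, hmem I hI J hJ K hK⟩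
  have hquad_int : Integrable (fun ω => ∑ I ∈ 𝒲n, ∑ J ∈ 𝒲n, ℓ I * ℓ J *
      pairWith (fun K => sigX K T ω) ((shuffle I J).map (· ++ [0]))) μ :=
    integrable_finsetSum _ fun I hI => integrable_finsetSum _ fun J hJ =>
      (integrable_pairWith (hsig_int I hI J hJ)).const_mul _
  have hlin : ∫ ω, ∑ I ∈ 𝒲n, ℓ I * etil I T ω ∂μ = 0 := by
    rw [integral_finsetSum _ fun I _ => ((hmart I).integrable T).const_mul _]
    refine Finset.sum_eq_zero fun I _ => ?_
    simp [MeasureTheory.integral_const_mul, (hmart I).integral_eq_of_le hT, hetil0]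
  rw [integral_congr_ae (ae_of_all _ hlog),
    integral_add (hquad_int.const_mul _)
      (integrable_finsetSum _ fun I _ => ((hmart I).integrable T).const_mul _),
    hlin, add_zero, MeasureTheory.integral_const_mul, integral_finsetSum _ fun I hI => integrable_finsetSum _
      fun J hJ => (integrable_pairWith (hsig_int I hI J hJ)).const_mul _]
  refine congrArg _ (Finset.sum_congr rfl fun I hI => ?_)
  rw [integral_finsetSum _ fun J hJ => (integrable_pairWith (hsig_int I hI J hJ)).const_mul _]
  refine Finset.sum_congr rfl fun J hJ => ?_
  rw [MeasureTheory.integral_const_mul, integral_pairWith (hsig_int I hI J hJ),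
    pairWith_eq_sum_count (hmem I hI J hJ)]
  simp_rw [hmoment0, Finset.mul_sum, mul_assoc]
end
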